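/- For integers m ≥ 2, the coefficient p_2(m) of α^2 in the Binet polynomial b_m(α) satisfies p_2(m) = (1/4)·(m−2)!·(1 − 2/m). -/

import Mathlib

noncomputable def binetB (m : ℕ) (α : ℝ) : ℝ :=
  (1 / (m : ℝ)) * ∫ x in (α - 1)..α, (x + 1/2 - α) * ∏ k ∈ Finset.range m, ((k : ℝ) + x)

/-!
Differentiating under the moving window `[α - 1, α]` twice gives, for any differentiable
weight `f`,
`(d/dα)² ∫_{α-1}^{α} (x + c - α) f x dx = c f'(α) + (1 - c) f'(α - 1) - f(α) + f(α - 1)`.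
For `b_m` the weight is the rising factorial `p(x) = x (x + 1) ⋯ (x + m - 1)`, which vanishes at
`0` and `-1`, while `p'(0) = (m - 1)!` and `p'(-1) = -(m - 2)!`; with `c = 1/2` this gives
`b_m''(0) = ((m - 1)! - (m - 2)!) / (2m)`.
-/

open Finset Polynomial

theorem hasDerivAt_integral_sub_one_self {f : ℝ → ℝ} (hf : Continuous f) (a : ℝ) :
    HasDerivAt (fun b => ∫ x in (b - 1)..b, f x) (f a - f (a - 1)) a := by
  have hsplit : (fun b => ∫ x in (b - 1)..b, f x) =
      fun b => (∫ x in (0 : ℝ)..b, f x) - ∫ x in (0 : ℝ)..(b - 1), f x :=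
    funext fun b => (intervalIntegral.integral_interval_sub_left
      (hf.intervalIntegrable _ _) (hf.intervalIntegrable _ _)).symm
  have hF (b : ℝ) : HasDerivAt (fun u => ∫ x in (0 : ℝ)..u, f x) (f b) b :=
    (hf.integral_hasStrictDerivAt 0 b).hasDerivAt
  rw [hsplit]
  exact (hF a).sub ((hF (a - 1)).comp_sub_const a 1)

theorem hasDerivAt_integral_sub_one_self_weighted {f : ℝ → ℝ} (hf : Continuous f) (c a : ℝ) :
    HasDerivAt (fun b => ∫ x in (b - 1)..b, (x + c - b) * f x)
      (c * f a + (1 - c) * f (a - 1) - ∫ x in (a - 1)..a, f x) a := by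
  have hxf : Continuous fun x => x * f x := continuous_id.mul hf
  have hsplit : (fun b => ∫ x in (b - 1)..b, (x + c - b) * f x) =
      fun b => (∫ x in (b - 1)..b, x * f x) + (c - b) * ∫ x in (b - 1)..b, f x := by
    funext b
    rw [← intervalIntegral.integral_const_mul, ← intervalIntegral.integral_add
      (hxf.intervalIntegrable _ _) ((hf.intervalIntegrable _ _).const_mul _)]
    congr 1 with x
    ring
  rw [hsplit]
  have hweight : HasDerivAt (fun b => c - b) (-1) a := (hasDerivAt_id' a).const_sub c
  refine ((hasDerivAt_integral_sub_one_self hxf a).fun_add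
    (hweight.fun_mul (hasDerivAt_integral_sub_one_self hf a))).congr_deriv ?_
  ring

theorem iteratedDeriv_two_integral_sub_one_self_weighted {f : ℝ → ℝ} (hf : Differentiable ℝ f)
    (c a : ℝ) :
    iteratedDeriv 2 (fun b => ∫ x in (b - 1)..b, (x + c - b) * f x) a =
      c * deriv f a + (1 - c) * deriv f (a - 1) - (f a - f (a - 1)) := by
  have hderiv : deriv (fun b => ∫ x in (b - 1)..b, (x + c - b) * f x) =
      fun b => c * f b + (1 - c) * f (b - 1) - ∫ x in (b - 1)..b, f x :=
    funext fun b => (hasDerivAt_integral_sub_one_self_weighted hf.continuous c b).deriv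
  rw [iteratedDeriv_succ, iteratedDeriv_one, hderiv]
  apply HasDerivAt.deriv
  exact (((hf a).hasDerivAt.const_mul c).add
    (((hf (a - 1)).hasDerivAt.comp_sub_const a 1).const_mul (1 - c))).sub
    (hasDerivAt_integral_sub_one_self hf.continuous a)

theorem ascPochhammer_eval_eq_prod_range {R : Type*} [CommSemiring R] (n : ℕ) (x : R) :
    (ascPochhammer R n).eval x = ∏ k ∈ range n, ((k : R) + x) := by
  induction n with
  | zero => simp
  | succ n ih => rw [ascPochhammer_succ_eval, ih, prod_range_succ, add_comm x]

theorem ascPochhammer_eval_succ_left {R : Type*} [CommSemiring R] (n : ℕ) (x : R) :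
    (ascPochhammer R (n + 1)).eval x = x * (ascPochhammer R n).eval (x + 1) := by
  rw [ascPochhammer_succ_left, eval_mul, eval_X, eval_comp, eval_add, eval_X, eval_one]

theorem hasDerivAt_ascPochhammer_eval_zero (n : ℕ) :
    HasDerivAt (fun x : ℝ => (ascPochhammer ℝ (n + 1)).eval x) (n.factorial : ℝ) 0 := by
  simp_rw [ascPochhammer_eval_succ_left]
  refine ((hasDerivAt_id' (0 : ℝ)).fun_mul
    (((ascPochhammer ℝ n).hasDerivAt (0 + 1)).comp_add_const 0 1)).congr_deriv ?_
  simp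

theorem hasDerivAt_ascPochhammer_eval_neg_one (n : ℕ) :
    HasDerivAt (fun x : ℝ => (ascPochhammer ℝ (n + 2)).eval x) (-n.factorial : ℝ) (-1) := by
  simp_rw [ascPochhammer_eval_succ_left (n := n + 1)]
  have hshift := HasDerivAt.comp_add_const (-1 : ℝ) 1
    (by rw [neg_add_cancel]; exact hasDerivAt_ascPochhammer_eval_zero n)
  refine ((hasDerivAt_id' (-1 : ℝ)).fun_mul hshift).congr_deriv ?_
  simp

/-- The coefficient `p_2(m) = (1/2!)·(d²/dα² b_m)(0)` of `α²` in the Binet polynomial. -/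
theorem binetB_coeff_two (m : ℕ) (hm : 2 ≤ m) :
    (1/2 : ℝ) * iteratedDeriv 2 (fun α => binetB m α) 0 =
      (1/4) * ((m - 2).factorial : ℝ) * (1 - 2 / (m : ℝ)) := by
  obtain ⟨n, rfl⟩ := Nat.exists_eq_add_of_le' hm
  have hP0 : (ascPochhammer ℝ (n + 2)).eval 0 = 0 := ascPochhammer_ne_zero_eval_zero _ (by omega)
  have hP1 : (ascPochhammer ℝ (n + 2)).eval (-1) = 0 := by
    exact_mod_cast ascPochhammer_eval_neg_coe_nat_of_lt (R := ℝ) (k := 1) (n := n + 2) (by omega)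
  simp only [binetB, ← ascPochhammer_eval_eq_prod_range]
  rw [iteratedDeriv_const_mul_field,
    iteratedDeriv_two_integral_sub_one_self_weighted (Polynomial.differentiable _),
    zero_sub, (hasDerivAt_ascPochhammer_eval_zero (n + 1)).deriv,
    (hasDerivAt_ascPochhammer_eval_neg_one n).deriv, hP0, hP1, Nat.add_sub_cancel,
    Nat.factorial_succ]
  push_cast
  field_simp
  ring
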